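/- Let H be a nonempty simple graph. There exists a connected simple graph whose three metric subgraphs (central, annular, and peripheral subgraphs) are all isomorphic to H if and only if either H is disconnected, or H is connected and rad(H) ≥ 4. -/

import Mathlib

/-!
Necessity: in a finite graph a vertex farthest from a peripheral vertex `p` is itself
peripheral, so if the peripheral subgraph is connected, `diam G` is at most the eccentricity of
`p` inside it, hence at most its radius. A nonempty annulus forces
`rad G + 2 ≤ diam G ≤ 2 rad G`, so `diam G ≥ 4`.

Sufficiency: take three copies `H₀, H₁, H₂` of `H`, join `H₀` completely to `H₁`, and join each
vertex of `H₁` to its copy in `H₂`. The vertices of `H₀, H₁, H₂` have eccentricity `2, 3, 4`;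
the value `4` needs every vertex of `H` to have a vertex at distance at least `4` (or
unreachable) in `H`, which is exactly the hypothesis on `H`.
-/

/-- Eccentricity of a vertex in a (finite connected) simple graph:
the maximum distance from `v` to any vertex. -/
noncomputable def SimpleGraph.mecc {V : Type*} (G : SimpleGraph V) (v : V) : ℕ :=
  sSup (Set.range (G.dist v))

/-- Radius: the minimum eccentricity. -/
noncomputable def SimpleGraph.mrad {V : Type*} (G : SimpleGraph V) : ℕ :=
  sInf (Set.range G.mecc)

/-- Diameter: the maximum eccentricity. -/
noncomputable def SimpleGraph.mdiam {V : Type*} (G : SimpleGraph V) : ℕ :=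
  sSup (Set.range G.mecc)

/-- The center: the set of vertices of minimum eccentricity. -/
noncomputable def SimpleGraph.mcenter {V : Type*} (G : SimpleGraph V) : Set V :=
  {v | G.mecc v = G.mrad}

/-- The annulus: the set of vertices of intermediate eccentricity. -/
noncomputable def SimpleGraph.mannulus {V : Type*} (G : SimpleGraph V) : Set V :=
  {v | G.mrad < G.mecc v ∧ G.mecc v < G.mdiam}

/-- The periphery: the set of vertices of maximum eccentricity. -/
noncomputable def SimpleGraph.mperiphery {V : Type*} (G : SimpleGraph V) : Set V :=
  {v | G.mecc v = G.mdiam}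

namespace SimpleGraph

variable {V V' : Type*} {G : SimpleGraph V} {G' : SimpleGraph V'} {u v : V}

lemma Reachable.dist_map_le (h : G.Reachable u v) (f : G →g G') :
    G'.dist (f u) (f v) ≤ G.dist u v := by
  obtain ⟨p, hp⟩ := h.exists_walk_length_eq_dist
  calc G'.dist (f u) (f v) ≤ (p.map f).length := dist_le _
    _ = G.dist u v := by rw [Walk.length_map, hp]

lemma Reachable.apply_le_apply_add_dist (h : G.Reachable u v) (f : V → ℕ)
    (hf : ∀ a b, G.Adj a b → f b ≤ f a + 1) : f v ≤ f u + G.dist u v := by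
  obtain ⟨p, hp⟩ := h.exists_walk_length_eq_dist
  rw [← hp]
  clear hp h
  induction p with
  | nil => simp
  | cons hab _ ih =>
    rw [Walk.length_cons]
    have := hf _ _ hab
    omega

namespace Iso

lemma dist_eq (φ : G ≃g G') (u v : V) : G'.dist (φ u) (φ v) = G.dist u v := by
  by_cases h : G.Reachable u v
  · refine le_antisymm (h.dist_map_le φ.toHom) ?_
    simpa using (Iso.reachable_iff (φ := φ) |>.mpr h).dist_map_le φ.symm.toHom
  · rw [dist_eq_zero_of_not_reachable h,
      dist_eq_zero_of_not_reachable fun h' => h (Iso.reachable_iff.mp h')]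

lemma mecc_eq (φ : G ≃g G') (v : V) : G'.mecc (φ v) = G.mecc v := by
  have : G'.dist (φ v) ∘ φ = G.dist v := funext (φ.dist_eq v)
  rw [mecc, mecc, ← this, φ.surjective.range_comp]

lemma range_mecc (φ : G ≃g G') : Set.range G'.mecc = Set.range G.mecc := by
  have : G'.mecc ∘ φ = G.mecc := funext φ.mecc_eq
  rw [← this, φ.surjective.range_comp]

lemma mrad_eq (φ : G ≃g G') : G'.mrad = G.mrad := by rw [mrad, mrad, φ.range_mecc]

lemma mdiam_eq (φ : G ≃g G') : G'.mdiam = G.mdiam := by rw [mdiam, mdiam, φ.range_mecc]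

lemma bijOn_mcenter (φ : G ≃g G') : Set.BijOn φ G.mcenter G'.mcenter :=
  φ.toEquiv.bijOn fun v => by
    change G'.mecc (φ v) = G'.mrad ↔ G.mecc v = G.mrad
    rw [φ.mecc_eq, φ.mrad_eq]

lemma bijOn_mannulus (φ : G ≃g G') : Set.BijOn φ G.mannulus G'.mannulus :=
  φ.toEquiv.bijOn fun v => by
    change G'.mrad < G'.mecc (φ v) ∧ G'.mecc (φ v) < G'.mdiam ↔
      G.mrad < G.mecc v ∧ G.mecc v < G.mdiam
    rw [φ.mecc_eq, φ.mrad_eq, φ.mdiam_eq]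

lemma bijOn_mperiphery (φ : G ≃g G') : Set.BijOn φ G.mperiphery G'.mperiphery :=
  φ.toEquiv.bijOn fun v => by
    change G'.mecc (φ v) = G'.mdiam ↔ G.mecc v = G.mdiam
    rw [φ.mecc_eq, φ.mdiam_eq]

end Iso

lemma mecc_le [Nonempty V] {k : ℕ} (h : ∀ v, G.dist u v ≤ k) : G.mecc u ≤ k :=
  csSup_le (Set.range_nonempty _) (Set.forall_mem_range.2 h)

lemma mrad_le_mecc (v : V) : G.mrad ≤ G.mecc v := Nat.sInf_le ⟨v, rfl⟩

lemma le_mrad [Nonempty V] {k : ℕ} (h : ∀ v, k ≤ G.mecc v) : k ≤ G.mrad :=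
  le_csInf (Set.range_nonempty _) (Set.forall_mem_range.2 h)

lemma exists_mecc_eq_mrad [Nonempty V] : ∃ v, G.mecc v = G.mrad :=
  Nat.sInf_mem (Set.range_nonempty _)

lemma mdiam_le [Nonempty V] {k : ℕ} (h : ∀ v, G.mecc v ≤ k) : G.mdiam ≤ k :=
  csSup_le (Set.range_nonempty _) (Set.forall_mem_range.2 h)

section Finite

variable [Finite V]

lemma dist_le_mecc (u v : V) : G.dist u v ≤ G.mecc u :=
  le_csSup (Set.finite_range _).bddAbove ⟨v, rfl⟩

lemma exists_dist_eq_mecc [Nonempty V] (u : V) : ∃ v, G.dist u v = G.mecc u :=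
  Nat.sSup_mem (Set.range_nonempty _) (Set.finite_range _).bddAbove

lemma mecc_le_mdiam (v : V) : G.mecc v ≤ G.mdiam :=
  le_csSup (Set.finite_range _).bddAbove ⟨v, rfl⟩

lemma Connected.mecc_le_mecc_add_one (hG : G.Connected) {v : V} (huv : G.Adj u v) :
    G.mecc u ≤ G.mecc v + 1 :=
  have := hG.nonempty
  mecc_le fun w => calc
    G.dist u w ≤ G.dist u v + G.dist v w := hG.dist_triangle
    _ ≤ 1 + G.mecc v := add_le_add (dist_eq_one_iff_adj.2 huv).le (dist_le_mecc v w)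
    _ = G.mecc v + 1 := add_comm _ _

lemma Connected.mdiam_le_two_mul_mrad (hG : G.Connected) : G.mdiam ≤ 2 * G.mrad := by
  have := hG.nonempty
  obtain ⟨c, hc⟩ := G.exists_mecc_eq_mrad
  refine mdiam_le fun v => mecc_le fun w => ?_
  calc G.dist v w ≤ G.dist v c + G.dist c w := hG.dist_triangle
    _ ≤ G.mecc c + G.mecc c :=
        add_le_add (dist_comm (G := G) ▸ dist_le_mecc c v) (dist_le_mecc c w)
    _ = 2 * G.mrad := by rw [hc, two_mul]

/-- A farthest vertex from a peripheral vertex is itself peripheral. -/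
lemma mdiam_le_mrad_induce_mperiphery (hP : (G.induce G.mperiphery).Connected) :
    G.mdiam ≤ (G.induce G.mperiphery).mrad := by
  have := hP.nonempty
  obtain ⟨p, hp⟩ := (G.induce G.mperiphery).exists_mecc_eq_mrad
  have : Nonempty V := ⟨p⟩
  obtain ⟨z, hz⟩ := G.exists_dist_eq_mecc (p : V)
  have hzP : z ∈ G.mperiphery :=
    le_antisymm (mecc_le_mdiam z) (p.2 ▸ hz ▸ dist_comm (G := G) ▸ dist_le_mecc z p)
  calc G.mdiam = G.dist p z := p.2 ▸ hz.symm
    _ ≤ (G.induce G.mperiphery).dist p ⟨z, hzP⟩ :=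
        (hP p ⟨z, hzP⟩).dist_map_le (Embedding.induce _).toHom
    _ ≤ (G.induce G.mperiphery).mrad := hp ▸ dist_le_mecc _ _

lemma four_le_mrad_induce_mperiphery (hG : G.Connected) (hv : v ∈ G.mannulus)
    (hP : (G.induce G.mperiphery).Connected) : 4 ≤ (G.induce G.mperiphery).mrad := by
  have := hG.mdiam_le_two_mul_mrad
  have := mdiam_le_mrad_induce_mperiphery hP
  obtain ⟨_, _⟩ := hv
  omega

lemma exists_four_le_edist [Nonempty V] (hG : ¬ G.Connected ∨ 4 ≤ G.mrad) (u : V) :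
    ∃ v, 4 ≤ G.edist u v := by
  rcases hG with hG | hG
  · obtain ⟨a, b, hab⟩ : ∃ a b, ¬ G.Reachable a b := by
      simpa [connected_iff, Preconnected] using hG
    by_cases hua : G.Reachable u a
    · exact ⟨b, by rw [edist_eq_top_of_not_reachable fun hub => hab (hua.symm.trans hub)]; simp⟩
    · exact ⟨a, by rw [edist_eq_top_of_not_reachable hua]; simp⟩
  · obtain ⟨v, hv⟩ := G.exists_dist_eq_mecc u
    refine ⟨v, le_trans ?_ (ENat.natCast_toNat_le_self (G.edist u v))⟩
    exact_mod_cast hG.trans (hv ▸ mrad_le_mecc u)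

end Finite

section ThreeLayer

variable {W : Type*} (H : SimpleGraph W)

/-- Layer sum `1` joins layer `0` completely to layer `1`; layer sum `3` matches each `(x, 1)`
with `(x, 2)`. -/
def threeLayer : SimpleGraph (W × Fin 3) where
  Adj a b :=
    (a.2 = b.2 ∧ H.Adj a.1 b.1) ∨ (a.2 : ℕ) + b.2 = 1 ∨ (a.1 = b.1 ∧ (a.2 : ℕ) + b.2 = 3)
  symm := ⟨by
    rintro a b (⟨h, hH⟩ | h | ⟨h, h'⟩)
    · exact .inl ⟨h.symm, hH.symm⟩
    · exact .inr (.inl (by omega))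
    · exact .inr (.inr ⟨h.symm, by omega⟩)⟩
  loopless := ⟨by
    rintro a (⟨-, h⟩ | h | ⟨-, h⟩)
    · exact H.irrefl h
    all_goals omega⟩

variable {H}

lemma threeLayer_adj_zero_one (x y : W) : (threeLayer H).Adj (x, 0) (y, 1) := .inr (.inl rfl)

lemma threeLayer_adj_one_two (x : W) : (threeLayer H).Adj (x, 1) (x, 2) := .inr (.inr ⟨rfl, rfl⟩)

lemma threeLayer_adj_same_layer {x y : W} {i : Fin 3} :
    (threeLayer H).Adj (x, i) (y, i) ↔ H.Adj x y := by
  refine ⟨?_, fun h => .inl ⟨rfl, h⟩⟩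
  rintro (⟨-, h⟩ | h | ⟨-, h⟩)
  · exact h
  all_goals simp only at h
  all_goals omega

lemma threeLayer_reachable_zero (x y : W) (i : Fin 3) :
    (threeLayer H).Reachable (x, 0) (y, i) := by
  have h₁ : (threeLayer H).Reachable (x, 0) (y, 1) := (threeLayer_adj_zero_one x y).reachable
  fin_cases i
  · exact h₁.trans (threeLayer_adj_zero_one y y).symm.reachable
  · exact h₁
  · exact h₁.trans (threeLayer_adj_one_two y).reachable

lemma threeLayer_preconnected : (threeLayer H).Preconnected := fun ⟨x, i⟩ ⟨y, j⟩ =>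
  (threeLayer_reachable_zero x x i).symm.trans (threeLayer_reachable_zero x y j)

lemma threeLayer_connected [Nonempty W] : (threeLayer H).Connected :=
  ⟨threeLayer_preconnected⟩

lemma threeLayer_mecc_zero_le [Nonempty W] (x : W) : (threeLayer H).mecc (x, 0) ≤ 2 := by
  refine mecc_le fun ⟨y, i⟩ => ?_
  fin_cases i
  · exact (dist_le (.cons (threeLayer_adj_zero_one x x)
      (.cons (threeLayer_adj_zero_one y x).symm .nil))).trans_eq rfl
  · exact (dist_eq_one_iff_adj.2 (threeLayer_adj_zero_one x y)).trans_le one_le_two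
  · exact (dist_le (.cons (threeLayer_adj_zero_one x y)
      (.cons (threeLayer_adj_one_two y) .nil))).trans_eq rfl

/-- For `h` the distance from `x` in `H`, this potential is the distance from `(x, 2)` capped
at `4`; being `1`-Lipschitz, it bounds that distance from below. -/
lemma threeLayer_potential_adj_le {h : W → ℕ} (hh : ∀ x y, H.Adj x y → h y ≤ h x + 1) :
    ∀ a b : W × Fin 3, (threeLayer H).Adj a b →
      min (h b.1 + (2 - b.2)) (2 + b.2) ≤ min (h a.1 + (2 - a.2)) (2 + a.2) + 1 := by
  rintro ⟨x, i⟩ ⟨y, j⟩ hab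
  have := i.isLt
  have := j.isLt
  rcases hab with ⟨rfl, hxy⟩ | hij | ⟨rfl, hij⟩
  · have := hh x y hxy
    simp only
    omega
  all_goals simp only at hij ⊢
  all_goals omega

lemma four_le_threeLayer_dist {x y : W} (hxy : 4 ≤ H.edist x y) :
    4 ≤ (threeLayer H).dist (x, 2) (y, 2) := by
  classical
  let d (z : W) : ℕ := if H.Reachable x z then H.dist x z else 4
  have hh (z z' : W) (hzz' : H.Adj z z') : d z' ≤ d z + 1 := by
    by_cases hz : H.Reachable x z
    · have := hzz'.diff_dist_adj (u := x)
      simp only [d, hz, hz.trans hzz'.reachable, if_true]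
      omega
    · have hz' : ¬ H.Reachable x z' := fun hz' => hz (hz'.trans hzz'.symm.reachable)
      simp only [d, hz, hz', if_false]
      omega
  have hx : d x = 0 := by simp [d]
  have hy : 4 ≤ d y := by
    by_cases hr : H.Reachable x y
    · simpa [d, hr, ← hr.coe_dist_eq_edist] using hxy
    · simp [d, hr]
  have := threeLayer_preconnected (H := H) (x, 2) (y, 2) |>.apply_le_apply_add_dist _
    (threeLayer_potential_adj_le hh)
  simp only [Fin.isValue, Fin.val_two] at this
  omega

section Eccentricity

variable [Finite W] [Nonempty W] (hH : ∀ x, ∃ y, 4 ≤ H.edist x y)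
include hH

lemma threeLayer_mecc (x : W) (i : Fin 3) : (threeLayer H).mecc (x, i) = i + 2 := by
  obtain ⟨y, hy⟩ := hH x
  have hG := threeLayer_connected (H := H)
  have h₀ := threeLayer_mecc_zero_le (H := H) x
  have h₂ := (four_le_threeLayer_dist hy).trans (dist_le_mecc _ _)
  have h₀₁ := hG.mecc_le_mecc_add_one (threeLayer_adj_zero_one x x)
  have h₁₀ := hG.mecc_le_mecc_add_one (threeLayer_adj_zero_one x x).symm
  have h₁₂ := hG.mecc_le_mecc_add_one (threeLayer_adj_one_two x)
  have h₂₁ := hG.mecc_le_mecc_add_one (threeLayer_adj_one_two x).symm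
  obtain rfl | rfl | rfl : i = 0 ∨ i = 1 ∨ i = 2 := by omega
  all_goals omega

lemma threeLayer_mrad : (threeLayer H).mrad = 2 := by
  obtain ⟨x⟩ := ‹Nonempty W›
  refine le_antisymm ?_ (le_mrad fun ⟨y, i⟩ => ?_)
  · simpa [threeLayer_mecc hH] using mrad_le_mecc (G := threeLayer H) (x, 0)
  · simp [threeLayer_mecc hH]

lemma threeLayer_mdiam : (threeLayer H).mdiam = 4 := by
  obtain ⟨x⟩ := ‹Nonempty W›
  refine le_antisymm (mdiam_le fun ⟨y, i⟩ => ?_) ?_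
  · rw [threeLayer_mecc hH]
    omega
  · simpa [threeLayer_mecc hH] using mecc_le_mdiam (G := threeLayer H) (x, 2)

lemma threeLayer_mcenter : (threeLayer H).mcenter = {a | a.2 = 0} := by
  ext ⟨x, i⟩
  simp only [mcenter, Set.mem_ofPred_eq, threeLayer_mecc hH, threeLayer_mrad hH]
  omega

lemma threeLayer_mannulus : (threeLayer H).mannulus = {a | a.2 = 1} := by
  ext ⟨x, i⟩
  simp only [mannulus, Set.mem_ofPred_eq, threeLayer_mecc hH, threeLayer_mrad hH,
    threeLayer_mdiam hH]
  omega

lemma threeLayer_mperiphery : (threeLayer H).mperiphery = {a | a.2 = 2} := by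
  ext ⟨x, i⟩
  simp only [mperiphery, Set.mem_ofPred_eq, threeLayer_mecc hH, threeLayer_mdiam hH]
  omega

end Eccentricity

variable (H) in
def threeLayerInduceLayerIso (i : Fin 3) : (threeLayer H).induce {a | a.2 = i} ≃g H where
  toFun a := a.1.1
  invFun x := ⟨(x, i), rfl⟩
  left_inv := by
    rintro ⟨⟨x, j⟩, rfl : j = i⟩
    rfl
  right_inv _ := rfl
  map_rel_iff' {a b} := by
    obtain ⟨⟨x, j⟩, rfl : j = i⟩ := a
    obtain ⟨⟨y, k⟩, rfl : k = j⟩ := b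
    exact threeLayer_adj_same_layer.symm

end ThreeLayer

end SimpleGraph

open SimpleGraph

theorem exists_graph_with_metric_subgraphs_iso_to_H_iff
    {W : Type*} [Fintype W] [Nonempty W] (H : SimpleGraph W) :
    (∃ (n : ℕ) (G : SimpleGraph (Fin n)), G.Connected ∧
        Nonempty (G.induce G.mcenter ≃g H) ∧
        Nonempty (G.induce G.mannulus ≃g H) ∧
        Nonempty (G.induce G.mperiphery ≃g H)) ↔
      (¬ H.Connected ∨ (H.Connected ∧ 4 ≤ H.mrad)) := by
  refine ⟨?_, fun h => ?_⟩
  · rintro ⟨n, G, hG, -, ⟨fa⟩, ⟨fp⟩⟩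
    refine or_iff_not_imp_left.2 fun hH => ?_
    rw [not_not] at hH
    have hA := (fa.symm (Classical.arbitrary W)).2
    have hP := fp.symm.connected_iff.1 hH
    exact ⟨hH, fp.mrad_eq ▸ four_le_mrad_induce_mperiphery hG hA hP⟩
  · have hH := H.exists_four_le_edist (h.imp_right And.right)
    let φ := (threeLayer H).overFinIso rfl
    refine ⟨_, _, φ.connected_iff.1 threeLayer_connected, ⟨?_⟩, ⟨?_⟩, ⟨?_⟩⟩
    · exact (φ.induce (threeLayer_mcenter hH ▸ φ.bijOn_mcenter)).symm.trans
        (threeLayerInduceLayerIso H 0)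
    · exact (φ.induce (threeLayer_mannulus hH ▸ φ.bijOn_mannulus)).symm.trans
        (threeLayerInduceLayerIso H 1)
    · exact (φ.induce (threeLayer_mperiphery hH ▸ φ.bijOn_mperiphery)).symm.trans
        (threeLayerInduceLayerIso H 2)
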